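/- arXiv:2303.15002 — 2 statements merged into one kernel-verified Lean document; each statement's English description precedes it below -/
import Mathlib

section
/- The domain D224 does not have maximal width: there is no linear order w in D224 whose reverse order also belongs to D224. -/
/-!
If `w` and its reverse both satisfy a never-law `xN1` or `xN3` on a triple, then `x` is neither
first nor last there, so it lies strictly between the other two elements in `w`. The laws
`8N1` on `{3, 4, 8}`, `3N3` on `{3, 7, 8}` and `4N3` on `{4, 7, 8}` then put `8` between `3` and
`4` while both `3` and `4` lie between `7` and `8`, which is impossible in a linear order.
-/

/-- The (1-indexed) rank of the element `x` within the triple `{a, b, c}` under the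
linear order `w` on `Fin n`, where `w k` is the element ranked in position `k`
(so `w.symm y` is the position of the element `y`). -/
def tripleRank {n : ℕ} (w : Equiv.Perm (Fin n)) (a b c x : Fin n) : ℕ :=
  (({a, b, c} : Finset (Fin n)).filter (fun y => w.symm y ≤ w.symm x)).card

/-- A Condorcet domain on `X_n = {1, ..., n}` (modelled as `Fin n`): for every triple
`a < b < c` there is an element `x` of the triple and a position `i ∈ {1, 2, 3}` such
that no order of `D` places `x` in position `i` when restricted to `{a, b, c}`. -/
def IsCondorcet (n : ℕ) (D : Set (Equiv.Perm (Fin n))) : Prop :=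
  ∀ a b c : Fin n, a < b → b < c →
    ∃ x ∈ ({a, b, c} : Finset (Fin n)), ∃ i ∈ ({1, 2, 3} : Finset ℕ),
      ∀ w ∈ D, tripleRank w a b c x ≠ i

/-- The reverse of a linear order `w` on `Fin n`: it ranks the elements in exactly the
opposite way to `w`. -/
def reverseOrder {n : ℕ} (w : Equiv.Perm (Fin n)) : Equiv.Perm (Fin n) :=
  w * Fin.revPerm

/-- The domain `D224`: all linear orders on `{1, ..., 8}` (modelled as `Fin 8`, with the
alternative `k` represented by `k - 1 : Fin 8`) satisfying the 56 listed never-laws. -/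
def D224 : Set (Equiv.Perm (Fin 8)) :=
  {w | tripleRank w 0 1 2 1 ≠ 3 ∧
    tripleRank w 0 1 3 0 ≠ 3 ∧
    tripleRank w 0 1 4 4 ≠ 1 ∧
    tripleRank w 0 1 5 5 ≠ 1 ∧
    tripleRank w 0 1 6 6 ≠ 1 ∧
    tripleRank w 0 1 7 7 ≠ 1 ∧
    tripleRank w 0 2 3 0 ≠ 3 ∧
    tripleRank w 0 2 4 4 ≠ 1 ∧
    tripleRank w 0 2 5 5 ≠ 1 ∧
    tripleRank w 0 2 6 6 ≠ 1 ∧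
    tripleRank w 0 2 7 7 ≠ 1 ∧
    tripleRank w 0 3 4 0 ≠ 3 ∧
    tripleRank w 0 3 5 0 ≠ 3 ∧
    tripleRank w 0 3 6 0 ≠ 3 ∧
    tripleRank w 0 3 7 0 ≠ 3 ∧
    tripleRank w 0 4 5 0 ≠ 3 ∧
    tripleRank w 0 4 6 0 ≠ 3 ∧
    tripleRank w 0 4 7 7 ≠ 1 ∧
    tripleRank w 0 5 6 6 ≠ 1 ∧
    tripleRank w 0 5 7 0 ≠ 3 ∧
    tripleRank w 0 6 7 0 ≠ 3 ∧
    tripleRank w 1 2 3 1 ≠ 3 ∧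
    tripleRank w 1 2 4 1 ≠ 3 ∧
    tripleRank w 1 2 5 1 ≠ 3 ∧
    tripleRank w 1 2 6 1 ≠ 3 ∧
    tripleRank w 1 2 7 1 ≠ 3 ∧
    tripleRank w 1 3 4 4 ≠ 1 ∧
    tripleRank w 1 3 5 5 ≠ 1 ∧
    tripleRank w 1 3 6 6 ≠ 1 ∧
    tripleRank w 1 3 7 7 ≠ 1 ∧
    tripleRank w 1 4 5 1 ≠ 3 ∧
    tripleRank w 1 4 6 1 ≠ 3 ∧
    tripleRank w 1 4 7 7 ≠ 1 ∧
    tripleRank w 1 5 6 6 ≠ 1 ∧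
    tripleRank w 1 5 7 1 ≠ 3 ∧
    tripleRank w 1 6 7 1 ≠ 3 ∧
    tripleRank w 2 3 4 4 ≠ 1 ∧
    tripleRank w 2 3 5 5 ≠ 1 ∧
    tripleRank w 2 3 6 6 ≠ 1 ∧
    tripleRank w 2 3 7 7 ≠ 1 ∧
    tripleRank w 2 4 5 2 ≠ 3 ∧
    tripleRank w 2 4 6 2 ≠ 3 ∧
    tripleRank w 2 4 7 7 ≠ 1 ∧
    tripleRank w 2 5 6 6 ≠ 1 ∧
    tripleRank w 2 5 7 2 ≠ 3 ∧
    tripleRank w 2 6 7 2 ≠ 3 ∧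
    tripleRank w 3 4 5 3 ≠ 3 ∧
    tripleRank w 3 4 6 3 ≠ 3 ∧
    tripleRank w 3 4 7 7 ≠ 1 ∧
    tripleRank w 3 5 6 6 ≠ 1 ∧
    tripleRank w 3 5 7 3 ≠ 3 ∧
    tripleRank w 3 6 7 3 ≠ 3 ∧
    tripleRank w 4 5 6 6 ≠ 1 ∧
    tripleRank w 4 5 7 7 ≠ 1 ∧
    tripleRank w 4 6 7 7 ≠ 1 ∧
    tripleRank w 5 6 7 6 ≠ 1}

open Finset Set

section tripleRank

variable {n : ℕ} (w : Equiv.Perm (Fin n)) {a b c x : Fin n}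

lemma reverseOrder_symm_apply (y : Fin n) : (reverseOrder w).symm y = (w.symm y).rev := by
  rw [reverseOrder, Equiv.Perm.mul_def, Equiv.symm_trans_apply]
  simp

lemma tripleRank_rotate : tripleRank w a b c x = tripleRank w c a b x := by
  rw [tripleRank, tripleRank, Finset.insert_comm c, Finset.pair_comm c]

lemma one_le_tripleRank (hx : x ∈ ({a, b, c} : Finset (Fin n))) : 1 ≤ tripleRank w a b c x :=
  Finset.card_pos.mpr ⟨x, Finset.mem_filter.mpr ⟨hx, le_rfl⟩⟩

lemma tripleRank_le_card : tripleRank w a b c x ≤ #({a, b, c} : Finset (Fin n)) :=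
  Finset.card_filter_le _ _

-- The two filters cover the triple and meet exactly in `x`.
lemma tripleRank_reverseOrder_add_tripleRank (hx : x ∈ ({a, b, c} : Finset (Fin n))) :
    tripleRank (reverseOrder w) a b c x + tripleRank w a b c x
      = #({a, b, c} : Finset (Fin n)) + 1 := by
  simp only [tripleRank, reverseOrder_symm_apply, Fin.rev_le_rev]
  rw [← Finset.card_union_add_card_inter, ← Finset.filter_or, ← Finset.filter_and,
    Finset.filter_true_of_mem (fun y _ => le_total _ _)]
  congr 1
  rw [Finset.card_eq_one]
  refine ⟨x, Finset.eq_singleton_iff_unique_mem.mpr ⟨Finset.mem_filter.mpr ⟨hx, le_rfl, le_rfl⟩, ?_⟩⟩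
  intro y hy
  rw [Finset.mem_filter] at hy
  exact w.symm.injective (le_antisymm hy.2.2 hy.2.1)

lemma tripleRank_self_eq_two_iff (hb : x ≠ b) (hc : x ≠ c) (hbc : b ≠ c) :
    tripleRank w x b c x = 2 ↔ w.symm x ∈ uIoo (w.symm b) (w.symm c) := by
  have hpb : w.symm x ≠ w.symm b := w.symm.injective.ne hb
  have hpc : w.symm x ≠ w.symm c := w.symm.injective.ne hc
  have hxbc : x ∉ ({b, c} : Finset (Fin n)) := by simp [hb, hc]
  rw [tripleRank, Finset.filter_insert, if_pos le_rfl, Finset.card_insert_of_notMem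
    (fun h => hxbc (Finset.mem_of_mem_filter x h)), Finset.filter_insert, Finset.filter_singleton,
    uIoo_eq_union, Set.mem_union, Set.mem_Ioo, Set.mem_Ioo]
  split_ifs with h1 h2 h2 <;> simp [hbc] <;> omega

lemma tripleRank_eq_two_of_ne {i : ℕ} (hi : i = 1 ∨ i = 3) (hx : x ∈ ({a, b, c} : Finset (Fin n)))
    (habc : #({a, b, c} : Finset (Fin n)) = 3) (h : tripleRank w a b c x ≠ i)
    (hrev : tripleRank (reverseOrder w) a b c x ≠ i) : tripleRank w a b c x = 2 := by
  have hsum := tripleRank_reverseOrder_add_tripleRank w hx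
  have hpos := one_le_tripleRank w hx
  have hle := tripleRank_le_card w (a := a) (b := b) (c := c) (x := x)
  omega

lemma mem_uIoo_of_tripleRank_ne {i : ℕ} (hi : i = 1 ∨ i = 3) (hb : x ≠ b) (hc : x ≠ c)
    (hbc : b ≠ c) (h : tripleRank w x b c x ≠ i) (hrev : tripleRank (reverseOrder w) x b c x ≠ i) :
    w.symm x ∈ uIoo (w.symm b) (w.symm c) :=
  (tripleRank_self_eq_two_iff w hb hc hbc).mp <| tripleRank_eq_two_of_ne w hi (by simp)
    (Finset.card_eq_three.mpr ⟨x, b, c, hb, hc, hbc, rfl⟩) h hrev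

end tripleRank

lemma Set.notMem_uIoo_of_mem_uIoo_of_mem_uIoo {α : Type*} [LinearOrder α] {a b c d : α}
    (ha : a ∈ uIoo d c) (hb : b ∈ uIoo d c) : c ∉ uIoo a b := by
  simp only [uIoo_eq_union, Set.mem_union, Set.mem_Ioo] at *
  intro hc
  rcases ha with ha | ha <;> rcases hb with hb | hb <;> rcases hc with hc | hc <;> order

lemma tripleRank_ne_of_mem_D224 {w : Equiv.Perm (Fin 8)} (hw : w ∈ D224) :
    tripleRank w 2 3 7 7 ≠ 1 ∧ tripleRank w 2 6 7 2 ≠ 3 ∧ tripleRank w 3 6 7 3 ≠ 3 := by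
  obtain ⟨-, -, -, -, -, -, -, -, -, -, -, -, -, -, -, -, -, -, -, -, -, -, -, -, -, -, -, -, -, -, -,
    -, -, -, -, -, -, -, -, h237, -, -, -, -, -, h267, -, -, -, -, -, h367, -, -, -, -⟩ := hw
  exact ⟨h237, h267, h367⟩

/-- `D224` does not have maximal width: no order of `D224` has its reverse in `D224`. -/
theorem stmt7 : ¬ ∃ w ∈ D224, reverseOrder w ∈ D224 := by
  rintro ⟨w, hw, hrw⟩
  obtain ⟨h237, h267, h367⟩ := tripleRank_ne_of_mem_D224 hw
  obtain ⟨r237, r267, r367⟩ := tripleRank_ne_of_mem_D224 hrw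
  rw [tripleRank_rotate] at h237 r237
  have h7 := mem_uIoo_of_tripleRank_ne w (.inl rfl) (by decide) (by decide) (by decide) h237 r237
  have h2 := mem_uIoo_of_tripleRank_ne w (.inr rfl) (by decide) (by decide) (by decide) h267 r267
  have h3 := mem_uIoo_of_tripleRank_ne w (.inr rfl) (by decide) (by decide) (by decide) h367 r367
  exact Set.notMem_uIoo_of_mem_uIoo_of_mem_uIoo h2 h3 h7
end

section
/- The domain D224 is self-dual: there exists a permutation g of {1,...,8} such that the set of reverses of the orders in D224 equals the image of D224 under relabeling by g (replacing each element a by g(a) in every order). -/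
/-- The image of a set of linear orders under relabelling of the alternatives by the
permutation `g`: each element `a` is replaced by `g a` in every order. -/
def relabel {n : ℕ} (g : Equiv.Perm (Fin n)) (D : Set (Equiv.Perm (Fin n))) :
    Set (Equiv.Perm (Fin n)) :=
  (fun w => g * w) '' D

/-!
Reversing an order turns the never-law `xNi` on a triple into `xN(4-i)`, and relabelling by a
permutation `g` moves a never-law on the triple `T` to one on `g T`. For the involution
`g = (1 7)(2 8)(3 5)(4 6)` the relabelled reversed laws of `D224` are again laws of `D224`, so
`w ↦ g * reverseOrder w` maps `D224` into itself; being an involution, it maps `D224` onto itself.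
-/

open Equiv Finset

theorem card_filter_le_add_card_filter_ge {α β : Type*} [DecidableEq α] [LinearOrder β]
    {f : α → β} (hf : Function.Injective f) {s : Finset α} {x : α} (hx : x ∈ s) :
    #{y ∈ s | f y ≤ f x} + #{y ∈ s | f x ≤ f y} = #s + 1 := by
  have h_ge : {y ∈ s | f x ≤ f y} = insert x {y ∈ s | ¬ f y ≤ f x} := by
    ext y
    simp only [mem_filter, mem_insert, not_le]
    constructor
    · rintro ⟨hy, hle⟩
      rcases hle.eq_or_lt with h | h
      · exact Or.inl (hf h).symm
      · exact Or.inr ⟨hy, h⟩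
    · rintro (rfl | ⟨hy, h⟩)
      · exact ⟨hx, le_rfl⟩
      · exact ⟨hy, h.le⟩
  rw [h_ge, card_insert_of_notMem (by simp), ← add_assoc, card_filter_add_card_filter_not]

section tripleRank

variable {n : ℕ} (w : Perm (Fin n))

theorem tripleRank_swap_left (a b c x : Fin n) :
    tripleRank w a b c x = tripleRank w b a c x := by
  simp only [tripleRank, insert_comm]

theorem tripleRank_swap_right (a b c x : Fin n) :
    tripleRank w a b c x = tripleRank w a c b x := by
  simp only [tripleRank, pair_comm]

theorem tripleRank_mul (g : Perm (Fin n)) (a b c x : Fin n) :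
    tripleRank (g * w) a b c x = tripleRank w (g⁻¹ a) (g⁻¹ b) (g⁻¹ c) (g⁻¹ x) := by
  have h_map : ({g⁻¹ a, g⁻¹ b, g⁻¹ c} : Finset (Fin n)) =
      ({a, b, c} : Finset (Fin n)).map g⁻¹.toEmbedding := by
    simp
  rw [tripleRank, tripleRank, h_map, filter_map, card_map]
  rfl

theorem tripleRank_reverseOrder {a b c x : Fin n} (hab : a ≠ b) (hac : a ≠ c) (hbc : b ≠ c)
    (hx : x ∈ ({a, b, c} : Finset (Fin n))) :
    tripleRank (reverseOrder w) a b c x = 4 - tripleRank w a b c x := by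
  have h_sum := card_filter_le_add_card_filter_ge w.symm.injective hx
  have h_card : #({a, b, c} : Finset (Fin n)) = 3 := card_eq_three.2 ⟨a, b, c, hab, hac, hbc, rfl⟩
  simp only [tripleRank, reverseOrder, Perm.mul_def, symm_trans_apply, Fin.revPerm_symm,
    Fin.revPerm_apply, Fin.rev_le_rev]
  omega

end tripleRank

section reverseOrder

variable {n : ℕ}

theorem reverseOrder_reverseOrder (w : Perm (Fin n)) : reverseOrder (reverseOrder w) = w := by
  ext
  simp [reverseOrder]

theorem reverseOrder_mul (g w : Perm (Fin n)) : reverseOrder (g * w) = g * reverseOrder w :=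
  mul_assoc g w Fin.revPerm

theorem reverseOrder_image_eq_relabel {D : Set (Perm (Fin n))} {g : Perm (Fin n)}
    (hg : g * g = 1) (hD : ∀ w ∈ D, g * reverseOrder w ∈ D) :
    reverseOrder '' D = relabel g D := by
  ext u
  constructor
  · rintro ⟨w, hw, rfl⟩
    exact ⟨g * reverseOrder w, hD w hw, show g * (g * _) = _ by rw [← mul_assoc, hg, one_mul]⟩
  · rintro ⟨v, hv, rfl⟩
    refine ⟨g * reverseOrder v, hD v hv, ?_⟩
    rw [reverseOrder_mul, reverseOrder_reverseOrder]

end reverseOrder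

def d224Duality : Perm (Fin 8) :=
  ⟨![6, 7, 4, 5, 2, 3, 0, 1], ![6, 7, 4, 5, 2, 3, 0, 1], by decide, by decide⟩

theorem d224Duality_mul_self : d224Duality * d224Duality = 1 := by decide

theorem d224Duality_mul_reverseOrder_mem {w : Perm (Fin 8)} (hw : w ∈ D224) :
    d224Duality * reverseOrder w ∈ D224 := by
  simp only [D224, Set.mem_ofPred_eq] at hw ⊢
  simp only [tripleRank_mul, inv_eq_of_mul_eq_one_left d224Duality_mul_self]
  simp only [d224Duality, coe_fn_mk, Fin.isValue, Matrix.cons_val_zero, Matrix.cons_val_one,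
    Matrix.cons_val]
  simp (disch := decide) only [tripleRank_reverseOrder]
  -- ordered rewriting with the swap lemmas sorts every triple, so the relabelled laws
  -- take the same form as the listed ones
  simp only [tripleRank_swap_left w, tripleRank_swap_right w] at hw ⊢
  have h_three : ∀ t : ℕ, 4 - t = 3 ↔ t = 1 := by omega
  have h_one : ∀ t : ℕ, 4 - t = 1 ↔ t = 3 := by omega
  simp only [ne_eq, h_three, h_one, hw, not_false_eq_true, and_self]

/-- `D224` is self-dual: the set of reverses of its orders is a relabelling of `D224`. -/
theorem stmt8 :
    ∃ g : Equiv.Perm (Fin 8), reverseOrder '' D224 = relabel g D224 :=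
  ⟨d224Duality, reverseOrder_image_eq_relabel d224Duality_mul_self
    fun _ => d224Duality_mul_reverseOrder_mem⟩
end
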